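/- For every positive integer n there exists a constant C_n > 0 such that, for all e ∈ [0,1) and all β > 2C_n, there exists an n-dimensional real subspace V of the space of 2π-periodic C^∞ functions z: ℝ → ℝ² with Q_{β,e}(z) < 0 for every nonzero z ∈ V. -/

import Mathlib

open Real intervalIntegral

/-! ### Auxiliary integral computations -/

lemma integral_cos_int' (m : ℤ) :
    ∫ t in (0:ℝ)..(2*π), Real.cos (m * t) = if m = 0 then 2*π else 0 := by
  rcases eq_or_ne m 0 with h | h
  · simp [h]
  · have hm : (m:ℝ) ≠ 0 := by exact_mod_cast h
    rw [if_neg h, intervalIntegral.integral_comp_mul_left Real.cos hm, integral_cos]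
    have h1 : Real.sin ((m:ℝ) * (2*π)) = 0 := by
      have := Real.sin_int_mul_pi (2*m)
      push_cast at this
      rw [show (m:ℝ) * (2*π) = 2*(m:ℝ)*π by ring]
      exact this
    simp [h1]

lemma intable_cos_mul' (c : ℝ) :
    IntervalIntegrable (fun t => Real.cos (c * t)) MeasureTheory.volume (0:ℝ) (2*π) :=
  (Real.continuous_cos.comp (continuous_const.mul continuous_id)).intervalIntegrable _ _

lemma integral_coscos (j k : ℕ) :
    ∫ t in (0:ℝ)..(2*π), Real.cos (j*t) * Real.cos (k*t)
      = if j = k then (if j = 0 then 2*π else π) else 0 := by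
  have hpt : ∀ t : ℝ, Real.cos (j*t) * Real.cos (k*t)
      = (Real.cos ((((j:ℤ) - k : ℤ):ℝ) * t) + Real.cos ((((j:ℤ) + k : ℤ):ℝ) * t)) / 2 := by
    intro t
    have h1 := Real.cos_sub ((j:ℝ)*t) ((k:ℝ)*t)
    have h2 := Real.cos_add ((j:ℝ)*t) ((k:ℝ)*t)
    push_cast
    rw [show ((j:ℝ) - k)*t = (j:ℝ)*t - (k:ℝ)*t by ring,
      show ((j:ℝ) + k)*t = (j:ℝ)*t + (k:ℝ)*t by ring, h1, h2]
    ring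
  simp only [hpt]
  rw [intervalIntegral.integral_div,
    intervalIntegral.integral_add (intable_cos_mul' _) (intable_cos_mul' _),
    integral_cos_int', integral_cos_int']
  rcases eq_or_ne j k with h | h
  · subst h
    rcases eq_or_ne j 0 with h0 | h0
    · subst h0; norm_num
    · have : (j:ℤ) + j ≠ 0 := by positivity
      simp [h0, this]
  · have h1 : (j:ℤ) - k ≠ 0 := by intro hh; apply h; omega
    have h3 : (j:ℤ) + k ≠ 0 := by omega
    simp [h1, h3, h]

lemma integral_sinsin (j k : ℕ) :
    ∫ t in (0:ℝ)..(2*π), Real.sin (j*t) * Real.sin (k*t)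
      = if j = k then (if j = 0 then 0 else π) else 0 := by
  have hpt : ∀ t : ℝ, Real.sin (j*t) * Real.sin (k*t)
      = (Real.cos ((((j:ℤ) - k : ℤ):ℝ) * t) - Real.cos ((((j:ℤ) + k : ℤ):ℝ) * t)) / 2 := by
    intro t
    have h1 := Real.cos_sub ((j:ℝ)*t) ((k:ℝ)*t)
    have h2 := Real.cos_add ((j:ℝ)*t) ((k:ℝ)*t)
    push_cast
    rw [show ((j:ℝ) - k)*t = (j:ℝ)*t - (k:ℝ)*t by ring,
      show ((j:ℝ) + k)*t = (j:ℝ)*t + (k:ℝ)*t by ring, h1, h2]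
    ring
  simp only [hpt]
  rw [intervalIntegral.integral_div,
    intervalIntegral.integral_sub (intable_cos_mul' _) (intable_cos_mul' _),
    integral_cos_int', integral_cos_int']
  rcases eq_or_ne j k with h | h
  · subst h
    rcases eq_or_ne j 0 with h0 | h0
    · subst h0; norm_num
    · have : (j:ℤ) + j ≠ 0 := by positivity
      simp [h0, this]
  · have h1 : (j:ℤ) - k ≠ 0 := by intro hh; apply h; omega
    have h3 : (j:ℤ) + k ≠ 0 := by omega
    simp [h1, h3, h]

/-! ### The trial functions -/

section

variable {n : ℕ}

/-- The Fourier cosine polynomial with coefficients `a`. -/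
noncomputable def fCos (n : ℕ) (a : Fin n → ℝ) : ℝ → ℝ :=
  fun t => ∑ k : Fin n, a k * Real.cos ((k:ℝ) * t)

/-- Its derivative. -/
noncomputable def fDer (n : ℕ) (a : Fin n → ℝ) : ℝ → ℝ :=
  fun t => ∑ k : Fin n, a k * (-Real.sin ((k:ℝ) * t) * (k:ℝ))

lemma fCos_hasDerivAt (a : Fin n → ℝ) (t : ℝ) : HasDerivAt (fCos n a) (fDer n a t) t := by
  apply HasDerivAt.fun_sum
  intro k _
  have h1 : HasDerivAt (fun t : ℝ => (k:ℝ) * t) (k:ℝ) t := by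
    simpa using (hasDerivAt_id t).const_mul (k:ℝ)
  exact (h1.cos).const_mul (a k)

lemma fCos_continuous (a : Fin n → ℝ) : Continuous (fCos n a) := by
  apply continuous_finset_sum
  intro k _
  exact continuous_const.mul (Real.continuous_cos.comp (continuous_const.mul continuous_id))

lemma fDer_continuous (a : Fin n → ℝ) : Continuous (fDer n a) := by
  apply continuous_finset_sum
  intro k _
  exact continuous_const.mul
    (((Real.continuous_sin.comp (continuous_const.mul continuous_id)).neg).mul continuous_const)

lemma int_fCos_sq (a : Fin n → ℝ) :
    ∫ t in (0:ℝ)..(2*π), (fCos n a t)^2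
      = ∑ k : Fin n, (a k)^2 * (if (k:ℕ) = 0 then 2*π else π) := by
  have key : ∀ j k : Fin n,
      (∫ t in (0:ℝ)..(2*π), (a j * Real.cos ((j:ℝ)*t)) * (a k * Real.cos ((k:ℝ)*t)))
      = if j = k then (a j)^2 * (if (j:ℕ) = 0 then 2*π else π) else 0 := by
    intro j k
    have hpt : ∀ t:ℝ, (a j * Real.cos ((j:ℝ)*t)) * (a k * Real.cos ((k:ℝ)*t))
        = (a j * a k) * (Real.cos (((j:ℕ):ℝ)*t) * Real.cos (((k:ℕ):ℝ)*t)) := by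
      intro t; ring
    simp only [hpt]
    rw [intervalIntegral.integral_const_mul, integral_coscos]
    rcases eq_or_ne j k with h|h
    · subst h; simp [sq]
    · have h2 : (j:ℕ) ≠ (k:ℕ) := by simpa [Fin.val_inj] using h
      simp [h2, h]
  have hsq : ∀ t:ℝ, (fCos n a t)^2 = ∑ j : Fin n, ∑ k : Fin n,
      (a j * Real.cos ((j:ℝ)*t)) * (a k * Real.cos ((k:ℝ)*t)) := by
    intro t; rw [fCos, sq, Finset.sum_mul_sum]
  simp only [hsq]
  rw [intervalIntegral.integral_finset_sum (by
    intro j _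
    apply Continuous.intervalIntegrable
    fun_prop)]
  refine Finset.sum_congr rfl fun j _ => ?_
  rw [intervalIntegral.integral_finset_sum (by
    intro k _
    apply Continuous.intervalIntegrable
    fun_prop)]
  simp only [key]
  rw [Finset.sum_ite_eq]
  simp

lemma int_fDer_sq (a : Fin n → ℝ) :
    ∫ t in (0:ℝ)..(2*π), (fDer n a t)^2
      = ∑ k : Fin n, (a k)^2 * ((k:ℝ))^2 * π := by
  have key : ∀ j k : Fin n,
      (∫ t in (0:ℝ)..(2*π),
        (a j * (-Real.sin ((j:ℝ)*t) * (j:ℝ))) * (a k * (-Real.sin ((k:ℝ)*t) * (k:ℝ))))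
      = if j = k then (a j)^2 * ((j:ℝ))^2 * (if (j:ℕ) = 0 then 0 else π) else 0 := by
    intro j k
    have hpt : ∀ t:ℝ,
        (a j * (-Real.sin ((j:ℝ)*t) * (j:ℝ))) * (a k * (-Real.sin ((k:ℝ)*t) * (k:ℝ)))
        = (a j * a k * (j:ℝ) * (k:ℝ)) * (Real.sin (((j:ℕ):ℝ)*t) * Real.sin (((k:ℕ):ℝ)*t)) := by
      intro t; ring
    simp only [hpt]
    rw [intervalIntegral.integral_const_mul, integral_sinsin]
    rcases eq_or_ne j k with h|h
    · subst h; simp only [eq_self_iff_true, if_true]; ring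
    · have h2 : (j:ℕ) ≠ (k:ℕ) := by simpa [Fin.val_inj] using h
      simp [h2, h]
  have hsq : ∀ t:ℝ, (fDer n a t)^2 = ∑ j : Fin n, ∑ k : Fin n,
      (a j * (-Real.sin ((j:ℝ)*t) * (j:ℝ))) * (a k * (-Real.sin ((k:ℝ)*t) * (k:ℝ))) := by
    intro t; rw [fDer, sq, Finset.sum_mul_sum]
  simp only [hsq]
  rw [intervalIntegral.integral_finset_sum (by
    intro j _
    apply Continuous.intervalIntegrable
    fun_prop)]
  refine Finset.sum_congr rfl fun j _ => ?_
  rw [intervalIntegral.integral_finset_sum (by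
    intro k _
    apply Continuous.intervalIntegrable
    fun_prop)]
  simp only [key]
  rw [Finset.sum_ite_eq]
  simp only [Finset.mem_univ, if_true]
  rcases eq_or_ne (j:ℕ) 0 with h0|h0
  · simp [h0]
  · simp [h0]

/-- Linearity of `fCos` in the coefficients. -/
lemma fCos_add (a b : Fin n → ℝ) (t : ℝ) : fCos n (a + b) t = fCos n a t + fCos n b t := by
  simp only [fCos, Pi.add_apply, add_mul, Finset.sum_add_distrib]

lemma fCos_smul (r : ℝ) (a : Fin n → ℝ) (t : ℝ) : fCos n (r • a) t = r * fCos n a t := by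
  simp only [fCos, Pi.smul_apply, smul_eq_mul, Finset.mul_sum, mul_assoc]

/-- The linear map sending coefficients to the trial loop. -/
noncomputable def phiMap (n : ℕ) : (Fin n → ℝ) →ₗ[ℝ] (ℝ → ℝ × ℝ) where
  toFun a := fun t => (fCos n a t * (-Real.sin t), fCos n a t * Real.cos t)
  map_add' a b := by
    funext t
    simp only [fCos_add, Pi.add_apply, Prod.mk_add_mk, Prod.mk.injEq]
    constructor <;> ring
  map_smul' r a := by
    funext t
    simp only [fCos_smul, Pi.smul_apply, RingHom.id_apply, Prod.smul_mk, smul_eq_mul,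
      Prod.mk.injEq]
    constructor <;> ring

lemma phiMap_apply (a : Fin n → ℝ) :
    phiMap n a = fun t => (fCos n a t * (-Real.sin t), fCos n a t * Real.cos t) := rfl

lemma phiMap_hasDerivAt (a : Fin n → ℝ) (t : ℝ) :
    HasDerivAt (phiMap n a)
      (fDer n a t * (-Real.sin t) + fCos n a t * (-Real.cos t),
       fDer n a t * Real.cos t + fCos n a t * (-Real.sin t)) t := by
  have hF := fCos_hasDerivAt a t
  have h1 : HasDerivAt (fun u => fCos n a u * (-Real.sin u))
      (fDer n a t * (-Real.sin t) + fCos n a t * (-Real.cos t)) t :=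
    hF.mul ((Real.hasDerivAt_sin t).neg)
  have h2 : HasDerivAt (fun u => fCos n a u * Real.cos u)
      (fDer n a t * Real.cos t + fCos n a t * (-Real.sin t)) t :=
    hF.mul (Real.hasDerivAt_cos t)
  exact h1.prodMk h2

end

/-- Pointwise algebraic simplification of the integrand. -/
lemma alg_integrand (F D s c e β : ℝ) (h : s^2 + c^2 = 1) (hd : 1 + e*c ≠ 0) :
    ((D*(-s) + F*(-c))^2 + (D*c + F*(-s))^2) - ((F*(-s))^2 + (F*c)^2)
      + ((β+3) * ((F*(-s))^2 + (F*c)^2)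
          + 3*(β+1) * (((2*c^2-1) * (F*(-s)) + (2*s*c) * (F*c)) * (F*(-s))
              + ((2*s*c) * (F*(-s)) - (2*c^2-1) * (F*c)) * (F*c)))
        / (2*(1 + e*c)) = D^2 - β * F^2 / (1 + e*c) := by
  have e1 : (D*(-s)+F*(-c))^2 + (D*c+F*(-s))^2 = D^2 + F^2 := by
    linear_combination (D^2+F^2) * h
  have e2 : ((2*c^2-1) * (F*(-s)) + (2*s*c) * (F*c)) * (F*(-s))
      + ((2*s*c) * (F*(-s)) - (2*c^2-1) * (F*c)) * (F*c) = -F^2 := by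
    linear_combination (-(F^2)*(2*c^2+1)) * h
  have e3 : (F*(-s))^2 + (F*c)^2 = F^2 := by linear_combination F^2 * h
  rw [e1, e2, e3]
  field_simp
  ring

/-- The quadratic form associated with the essential part of the linearized Hamiltonian
system at the elliptic Euler solution with parameters `(β, e)`. -/
noncomputable def eulerQ (β e : ℝ) (z : ℝ → ℝ × ℝ) : ℝ :=
  ∫ t in (0 : ℝ)..(2 * Real.pi),
    (((deriv z t).1 ^ 2 + (deriv z t).2 ^ 2) - ((z t).1 ^ 2 + (z t).2 ^ 2)
      + ((β + 3) * ((z t).1 ^ 2 + (z t).2 ^ 2)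
          + 3 * (β + 1) * ((Real.cos (2 * t) * (z t).1 + Real.sin (2 * t) * (z t).2) * (z t).1
              + (Real.sin (2 * t) * (z t).1 - Real.cos (2 * t) * (z t).2) * (z t).2))
        / (2 * (1 + e * Real.cos t)))

/-- For every `n ≥ 1` there is `C_n > 0` such that for all `e ∈ [0,1)` and `β > 2C_n` the
form `Q_{β,e}` is negative definite on some `n`-dimensional subspace of `2π`-periodic `C^∞`
functions. -/
theorem euler_form_negative_subspace (n : ℕ) (hn : 1 ≤ n) :
    ∃ C : ℝ, 0 < C ∧ ∀ e : ℝ, 0 ≤ e → e < 1 → ∀ β : ℝ, 2 * C < β →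
      ∃ V : Submodule ℝ (ℝ → ℝ × ℝ),
        Module.finrank ℝ V = n ∧
        (∀ z ∈ V, ContDiff ℝ (⊤ : ℕ∞) z ∧ ∀ t, z (t + 2 * Real.pi) = z t) ∧
        (∀ z ∈ V, z ≠ 0 → eulerQ β e z < 0) := by
  have hn1 : (1:ℝ) ≤ (n:ℝ) := by exact_mod_cast hn
  refine ⟨(n:ℝ)^2, by positivity, ?_⟩
  intro e he0 he1 β hβ
  have hβ0 : (0:ℝ) ≤ β := by nlinarith
  -- injectivity of the coefficient map
  have hinj : Function.Injective (phiMap n) := by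
    rw [← LinearMap.ker_eq_bot, Submodule.eq_bot_iff]
    intro a ha
    rw [LinearMap.mem_ker] at ha
    have hF0 : ∀ t, fCos n a t = 0 := by
      intro t
      have h1 : (phiMap n a) t = 0 := by rw [ha]; rfl
      rw [phiMap_apply] at h1
      have h2 := congrArg Prod.fst h1
      have h3 := congrArg Prod.snd h1
      simp only [Prod.fst_zero, Prod.snd_zero] at h2 h3
      by_contra hne
      have hs : Real.sin t = 0 := by
        rcases mul_eq_zero.mp h2 with h | h
        · exact absurd h hne
        · simpa using h
      have hc : Real.cos t = 0 := by
        rcases mul_eq_zero.mp h3 with h | h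
        · exact absurd h hne
        · exact h
      nlinarith [Real.sin_sq_add_cos_sq t]
    have hI : ∫ t in (0:ℝ)..(2*π), (fCos n a t)^2 = 0 := by simp [hF0]
    rw [int_fCos_sq] at hI
    have hnn : ∀ k ∈ Finset.univ, 0 ≤ (a k)^2 * (if (k:ℕ)=0 then 2*π else π) := by
      intro k _
      have : (0:ℝ) < (if (k:ℕ)=0 then 2*π else π) := by split_ifs <;> positivity
      positivity
    funext k
    have hterm := (Finset.sum_eq_zero_iff_of_nonneg hnn).mp hI k (Finset.mem_univ k)
    have hc : (0:ℝ) < (if (k:ℕ)=0 then 2*π else π) := by split_ifs <;> positivity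
    have ha2 : (a k)^2 = 0 := by
      rcases mul_eq_zero.mp hterm with h | h
      · exact h
      · exact absurd h (ne_of_gt hc)
    have := pow_eq_zero_iff (n := 2) (by norm_num) |>.mp ha2
    simpa using this
  refine ⟨LinearMap.range (phiMap n), ?_, ?_, ?_⟩
  · rw [LinearMap.finrank_range_of_inj hinj, Module.finrank_fin_fun]
  · intro z hz
    obtain ⟨a, rfl⟩ := LinearMap.mem_range.mp hz
    constructor
    · rw [phiMap_apply]
      have hF : ContDiff ℝ (⊤ : ℕ∞) (fCos n a) := by
        unfold fCos
        apply ContDiff.sum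
        intro k _
        exact contDiff_const.mul (Real.contDiff_cos.comp (contDiff_const.mul contDiff_id))
      exact (hF.mul (Real.contDiff_sin.neg)).prodMk (hF.mul Real.contDiff_cos)
    · intro t
      rw [phiMap_apply]
      simp only
      have hFp : fCos n a (t + 2*π) = fCos n a t := by
        unfold fCos
        refine Finset.sum_congr rfl fun k _ => ?_
        congr 1
        rw [show (k:ℝ)*(t+2*π) = (k:ℝ)*t + ((k:ℕ):ℝ)*(2*π) by push_cast; ring,
          Real.cos_add_nat_mul_two_pi]
      rw [hFp, Real.sin_add_two_pi, Real.cos_add_two_pi]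
  · intro z hz hz0
    obtain ⟨a, rfl⟩ := LinearMap.mem_range.mp hz
    have ha0 : a ≠ 0 := by
      rintro rfl
      simp only [map_zero, ne_eq, not_true_eq_false] at hz0
    set F := fCos n a with hFdef
    set D := fDer n a with hDdef
    have hd0 : ∀ t : ℝ, 0 < 1 + e * Real.cos t := fun t => by
      nlinarith [Real.neg_one_le_cos t]
    have hd2 : ∀ t : ℝ, 1 + e * Real.cos t ≤ 2 := fun t => by
      nlinarith [Real.cos_le_one t]
    -- rewrite the form
    have hQ : eulerQ β e (phiMap n a)
        = ∫ t in (0:ℝ)..(2*π), (D t^2 - β * (F t)^2 / (1 + e*Real.cos t)) := by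
      unfold eulerQ
      refine intervalIntegral.integral_congr ?_
      intro t _
      dsimp only
      have hzt : phiMap n a t = (F t * (-Real.sin t), F t * Real.cos t) := rfl
      have hdt : deriv (phiMap n a) t
          = (D t * (-Real.sin t) + F t * (-Real.cos t),
             D t * Real.cos t + F t * (-Real.sin t)) := (phiMap_hasDerivAt a t).deriv
      rw [hzt, hdt, Real.cos_two_mul, Real.sin_two_mul]
      have := alg_integrand (F t) (D t) (Real.sin t) (Real.cos t) e β
        (Real.sin_sq_add_cos_sq t) (ne_of_gt (hd0 t))
      simpa using this
    have hcont1 : Continuous fun t => D t^2 - β * (F t)^2 / (1 + e*Real.cos t) := by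
      refine Continuous.sub ((fDer_continuous a).pow 2) ?_
      exact (continuous_const.mul ((fCos_continuous a).pow 2)).div
        (continuous_const.add (continuous_const.mul Real.continuous_cos))
        (fun t => ne_of_gt (hd0 t))
    have hcont2 : Continuous fun t => D t^2 - β/2 * (F t)^2 :=
      ((fDer_continuous a).pow 2).sub (continuous_const.mul ((fCos_continuous a).pow 2))
    have hmono : eulerQ β e (phiMap n a) ≤ ∫ t in (0:ℝ)..(2*π), (D t^2 - β/2 * (F t)^2) := by
      rw [hQ]
      apply intervalIntegral.integral_mono_on (by positivity)
        (hcont1.intervalIntegrable _ _) (hcont2.intervalIntegrable _ _)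
      intro t _
      have h1 : β * (F t)^2 / 2 ≤ β * (F t)^2 / (1 + e*Real.cos t) :=
        div_le_div_of_nonneg_left (by positivity) (hd0 t) (hd2 t)
      nlinarith
    have hsplit : ∫ t in (0:ℝ)..(2*π), (D t^2 - β/2 * (F t)^2)
        = (∫ t in (0:ℝ)..(2*π), D t^2) - β/2 * ∫ t in (0:ℝ)..(2*π), (F t)^2 := by
      rw [intervalIntegral.integral_sub (f := fun t => D t^2) (g := fun t => β/2 * (F t)^2) (((fDer_continuous a).pow 2).intervalIntegrable _ _)
        ((continuous_const.mul ((fCos_continuous a).pow 2)).intervalIntegrable _ _),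
        intervalIntegral.integral_const_mul]
    set S := ∑ k : Fin n, (a k)^2 with hSdef
    have hS : 0 < S := by
      obtain ⟨k, hk⟩ := Function.ne_iff.mp ha0
      have hk' : a k ≠ 0 := by simpa using hk
      exact Finset.sum_pos' (fun i _ => sq_nonneg _)
        ⟨k, Finset.mem_univ k, by positivity⟩
    have hDle : (∫ t in (0:ℝ)..(2*π), D t^2) ≤ ((n:ℝ)-1)^2 * π * S := by
      rw [hDdef, int_fDer_sq, hSdef, Finset.mul_sum]
      apply Finset.sum_le_sum
      intro k _
      have hk : ((k:ℕ):ℝ) ≤ (n:ℝ) - 1 := by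
        have := k.isLt
        have : ((k:ℕ):ℝ) + 1 ≤ (n:ℝ) := by exact_mod_cast Nat.succ_le_of_lt k.isLt
        linarith
      have hk2 : ((k:ℕ):ℝ)^2 ≤ ((n:ℝ)-1)^2 := by
        have h0 : (0:ℝ) ≤ ((k:ℕ):ℝ) := by positivity
        nlinarith
      nlinarith [mul_le_mul_of_nonneg_left hk2 (mul_nonneg (sq_nonneg (a k)) Real.pi_pos.le)]
    have hFge : π * S ≤ ∫ t in (0:ℝ)..(2*π), (F t)^2 := by
      rw [hFdef, int_fCos_sq, hSdef, Finset.mul_sum]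
      apply Finset.sum_le_sum
      intro k _
      split_ifs
      · nlinarith [Real.pi_pos.le, sq_nonneg (a k)]
      · linarith [mul_comm π ((a k)^2)]
    have hfinal : ((n:ℝ)-1)^2 * π * S - β/2 * (π * S) < 0 := by
      have h1 : ((n:ℝ)-1)^2 < β/2 := by nlinarith
      have h2 : (0:ℝ) < π * S := by positivity
      nlinarith
    calc eulerQ β e (phiMap n a)
        ≤ (∫ t in (0:ℝ)..(2*π), D t^2) - β/2 * ∫ t in (0:ℝ)..(2*π), (F t)^2 := by
          rw [← hsplit]; exact hmono
      _ ≤ ((n:ℝ)-1)^2 * π * S - β/2 * (π * S) := by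
          have := mul_le_mul_of_nonneg_left hFge (by linarith : (0:ℝ) ≤ β/2)
          linarith
      _ < 0 := hfinal
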